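/- Let T₁, T₂ be geodesic simplices in H^n, B₁, B₂ balls intersecting all facets of T₁ and T₂ respectively, and P a hyperplane strictly separating B₁ from B₂. Then at least 2 vertices of T₁ lie on the B₁-side of P and at least 2 vertices of T₂ lie on the B₂-side of P. -/

import Mathlib

/-- Minkowski inner product on `ℝ^{1,n}`. -/
def minkS (n : ℕ) (x y : Fin (n + 1) → ℝ) : ℝ :=
  -(x 0 * y 0) + ∑ i : Fin n, x i.succ * y i.succ

/-- Membership in the hyperboloid model of `ℍⁿ`. -/
def onHyp (n : ℕ) (x : Fin (n + 1) → ℝ) : Prop :=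
  minkS n x x = -1 ∧ 0 < x 0

/-- The facet of the geodesic simplex with vertices `v` opposite vertex `v i`
(hyperbolic convex hull of the other vertices, in the hyperboloid model). -/
def hFacet (n : ℕ) (v : Fin (n + 1) → (Fin (n + 1) → ℝ)) (i : Fin (n + 1)) :
    Set (Fin (n + 1) → ℝ) :=
  {y | ∃ c : Fin (n + 1) → ℝ, (∀ j, 0 ≤ c j) ∧ c i = 0 ∧ (∃ j, c j ≠ 0) ∧
    minkS n (∑ j, c j • v j) (∑ j, c j • v j) < 0 ∧
    y = (Real.sqrt (-(minkS n (∑ j, c j • v j) (∑ j, c j • v j))))⁻¹ •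
          ∑ j, c j • v j}

/-!
A point of the facet opposite `v i` is a positive multiple of a nonnegative combination of the
other vertices, so `⟨u, ·⟩` is nonnegative on that facet as soon as it is nonnegative at every
other vertex. If at most one vertex were on the closed ball side of `P`, choose `i` to be that
vertex (or any vertex): the facet opposite it would then lie on the closed far side of `P`, yet
it meets the ball, which lies strictly on the near side.
-/

section Minkowski

variable {n : ℕ}

lemma minkS_smul_left (a : ℝ) (x y : Fin (n + 1) → ℝ) :
    minkS n (a • x) y = a * minkS n x y := by
  simp only [minkS, Pi.smul_apply, smul_eq_mul, mul_add, Finset.mul_sum]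
  ring_nf

lemma minkS_smul_right (a : ℝ) (x y : Fin (n + 1) → ℝ) :
    minkS n x (a • y) = a * minkS n x y := by
  simp only [minkS, Pi.smul_apply, smul_eq_mul, mul_add, Finset.mul_sum]
  ring_nf

lemma minkS_neg_left (x y : Fin (n + 1) → ℝ) : minkS n (-x) y = -minkS n x y := by
  simpa using minkS_smul_left (-1) x y

lemma minkS_sum_right {ι : Type*} (x : Fin (n + 1) → ℝ) (s : Finset ι)
    (f : ι → Fin (n + 1) → ℝ) :
    minkS n x (∑ j ∈ s, f j) = ∑ j ∈ s, minkS n x (f j) := by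
  simp only [minkS, Finset.sum_apply, Finset.mul_sum, Finset.sum_add_distrib,
    Finset.sum_neg_distrib]
  rw [Finset.sum_comm]

end Minkowski

section Facet

variable {n : ℕ} {v : Fin (n + 1) → Fin (n + 1) → ℝ} {i : Fin (n + 1)} {y : Fin (n + 1) → ℝ}

lemma onHyp_of_mem_hFacet (hv : ∀ j, onHyp n (v j)) (hy : y ∈ hFacet n v i) : onHyp n y := by
  obtain ⟨c, hc, -, ⟨j₀, hj₀⟩, hQ, rfl⟩ := hy
  set w := ∑ j, c j • v j
  have hs : 0 < Real.sqrt (-minkS n w w) := Real.sqrt_pos.2 (neg_pos.2 hQ)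
  have hs2 : Real.sqrt (-minkS n w w) ^ 2 = -minkS n w w := Real.sq_sqrt (by linarith)
  have hw0 : 0 < w 0 := by
    simp only [w, Finset.sum_apply, Pi.smul_apply, smul_eq_mul]
    refine Finset.sum_pos' (fun j _ => mul_nonneg (hc j) (hv j).2.le)
      ⟨j₀, Finset.mem_univ _, mul_pos ((hc j₀).lt_of_ne' hj₀) (hv j₀).2⟩
  constructor
  · rw [minkS_smul_left, minkS_smul_right]
    field_simp
    linarith
  · simp only [Pi.smul_apply, smul_eq_mul]
    positivity

lemma minkS_nonneg_of_mem_hFacet {u : Fin (n + 1) → ℝ}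
    (hu : ∀ j, j ≠ i → 0 ≤ minkS n u (v j)) (hy : y ∈ hFacet n v i) : 0 ≤ minkS n u y := by
  obtain ⟨c, hc, hci, -, -, rfl⟩ := hy
  rw [minkS_smul_right, minkS_sum_right u]
  refine mul_nonneg (by positivity) (Finset.sum_nonneg fun j _ => ?_)
  rw [minkS_smul_right]
  rcases eq_or_ne j i with rfl | hji
  · simp [hci]
  · exact mul_nonneg (hc j) (hu j hji)

end Facet

lemma exists_forall_ne_not_of_not_exists_pair {α : Type*} [Nonempty α] {p : α → Prop}
    (h : ¬∃ i j, i ≠ j ∧ p i ∧ p j) : ∃ i₀, ∀ j, j ≠ i₀ → ¬p j := by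
  by_cases hp : ∃ i, p i
  · obtain ⟨i, hi⟩ := hp
    exact ⟨i, fun j hji hj => h ⟨i, j, hji.symm, hi, hj⟩⟩
  · push Not at hp
    exact ⟨Classical.arbitrary α, fun j _ => hp j⟩

lemma two_vertices_nonpos_of_meets_facets {n : ℕ} {v : Fin (n + 1) → Fin (n + 1) → ℝ}
    (hv : ∀ i, onHyp n (v i)) {u : Fin (n + 1) → ℝ} {B : (Fin (n + 1) → ℝ) → Prop}
    (hmeets : ∀ i, ∃ y ∈ hFacet n v i, B y) (hsep : ∀ y, onHyp n y → B y → minkS n u y < 0) :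
    ∃ i j : Fin (n + 1), i ≠ j ∧ minkS n u (v i) ≤ 0 ∧ minkS n u (v j) ≤ 0 := by
  by_contra h
  obtain ⟨i₀, hi₀⟩ := exists_forall_ne_not_of_not_exists_pair h
  obtain ⟨y, hy, hBy⟩ := hmeets i₀
  have hfar : 0 ≤ minkS n u y :=
    minkS_nonneg_of_mem_hFacet (fun j hj => (not_le.1 (hi₀ j hj)).le) hy
  exact (hsep y (onHyp_of_mem_hFacet hv hy) hBy).not_ge hfar

theorem two_vertices_each_side_general
    (n : ℕ) (v₁ v₂ : Fin (n + 1) → (Fin (n + 1) → ℝ))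
    (hv₁ : ∀ i, onHyp n (v₁ i))
    (hv₂ : ∀ i, onHyp n (v₂ i))
    (c₁ c₂ : Fin (n + 1) → ℝ)
    (r₁ r₂ : ℝ)
    (hmeets₁ : ∀ i, ∃ y ∈ hFacet n v₁ i, -(minkS n c₁ y) ≤ Real.cosh r₁)
    (hmeets₂ : ∀ i, ∃ y ∈ hFacet n v₂ i, -(minkS n c₂ y) ≤ Real.cosh r₂)
    (u : Fin (n + 1) → ℝ)
    (hsep₁ : ∀ y, onHyp n y → -(minkS n c₁ y) ≤ Real.cosh r₁ → minkS n u y < 0)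
    (hsep₂ : ∀ y, onHyp n y → -(minkS n c₂ y) ≤ Real.cosh r₂ → 0 < minkS n u y) :
    (∃ i j : Fin (n + 1), i ≠ j ∧ minkS n u (v₁ i) ≤ 0 ∧ minkS n u (v₁ j) ≤ 0) ∧
    (∃ i j : Fin (n + 1), i ≠ j ∧ 0 ≤ minkS n u (v₂ i) ∧ 0 ≤ minkS n u (v₂ j)) := by
  refine ⟨two_vertices_nonpos_of_meets_facets hv₁ hmeets₁ hsep₁, ?_⟩
  have hsep₂' : ∀ y, onHyp n y → -(minkS n c₂ y) ≤ Real.cosh r₂ → minkS n (-u) y < 0 :=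
    fun y hy hB => by rw [minkS_neg_left]; exact neg_neg_of_pos (hsep₂ y hy hB)
  obtain ⟨i, j, hij, hi, hj⟩ := two_vertices_nonpos_of_meets_facets hv₂ hmeets₂ hsep₂'
  rw [minkS_neg_left, neg_nonpos] at hi hj
  exact ⟨i, j, hij, hi, hj⟩

/-- Let `T₁, T₂` be geodesic simplices in `ℍⁿ` (vertices `v₁, v₂`), and
`B₁, B₂` closed balls (centers `c₁, c₂`, radii `r₁, r₂`) meeting all facets of `T₁`,
`T₂` respectively.  Let `P` be a hyperplane (unit spacelike normal `u`) strictly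
separating `B₁` from `B₂`: every point of `B₁` has `⟨u, ·⟩ < 0` and every point of `B₂`
has `⟨u, ·⟩ > 0`.  Then at least `2` vertices of `T₁` lie on the closed `B₁`-side of
`P`, and at least `2` vertices of `T₂` lie on the closed `B₂`-side of `P`. -/
theorem two_vertices_each_side
    (n : ℕ) (v₁ v₂ : Fin (n + 1) → (Fin (n + 1) → ℝ))
    (hv₁ : ∀ i, onHyp n (v₁ i)) (hgen₁ : LinearIndependent ℝ v₁)
    (hv₂ : ∀ i, onHyp n (v₂ i)) (hgen₂ : LinearIndependent ℝ v₂)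
    (c₁ c₂ : Fin (n + 1) → ℝ) (hc₁ : onHyp n c₁) (hc₂ : onHyp n c₂)
    (r₁ r₂ : ℝ) (hr₁ : 0 ≤ r₁) (hr₂ : 0 ≤ r₂)
    (hmeets₁ : ∀ i, ∃ y ∈ hFacet n v₁ i, -(minkS n c₁ y) ≤ Real.cosh r₁)
    (hmeets₂ : ∀ i, ∃ y ∈ hFacet n v₂ i, -(minkS n c₂ y) ≤ Real.cosh r₂)
    (u : Fin (n + 1) → ℝ) (hu : minkS n u u = 1)
    (hsep₁ : ∀ y, onHyp n y → -(minkS n c₁ y) ≤ Real.cosh r₁ → minkS n u y < 0)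
    (hsep₂ : ∀ y, onHyp n y → -(minkS n c₂ y) ≤ Real.cosh r₂ → 0 < minkS n u y) :
    (∃ i j : Fin (n + 1), i ≠ j ∧ minkS n u (v₁ i) ≤ 0 ∧ minkS n u (v₁ j) ≤ 0) ∧
    (∃ i j : Fin (n + 1), i ≠ j ∧ 0 ≤ minkS n u (v₂ i) ∧ 0 ≤ minkS n u (v₂ j)) :=
  two_vertices_each_side_general n v₁ v₂ hv₁ hv₂ c₁ c₂ r₁ r₂ hmeets₁ hmeets₂ u hsep₁ hsep₂
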